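/- For every integer k̄ with 2w − 1 ≤ k̄ ≤ n one has ∑_{k=k̄}^{n} q̃^{(n)}(k) ≤ 4·e^{w}·w^{k̄}/k̄!. -/

import Mathlib

open Finset

open scoped Classical

noncomputable section

namespace HScut

/-- Level of a jump path `s : Fin n → ℤ` at time `t` (sum of the first `t` jumps). -/
def levelAt (n : ℕ) (s : Fin n → ℤ) (t : ℕ) : ℤ :=
  ∑ i ∈ Finset.univ.filter (fun i : Fin n => (i : ℕ) < t), s i

/-- Jump paths of length `n` with jumps of amplitude at most `m`. -/
def paths (n m : ℕ) : Finset (Fin n → ℤ) :=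
  Fintype.piFinset fun _ => Finset.Icc (-(m : ℤ)) (m : ℤ)

/-- Weight `π(s) = ∏ q (s i)` of a jump path. -/
def pathWeight (n : ℕ) (q : ℤ → ℝ) (s : Fin n → ℤ) : ℝ :=
  ∏ i, q (s i)

/-- Modified weight `π̃(s)`, where each `q (±i)` (`i ≠ 0`) is replaced by `max (q i) (q (-i))`
(which equals `w_i / n`). -/
def modWeight (n : ℕ) (q : ℤ → ℝ) (s : Fin n → ℤ) : ℝ :=
  ∏ i, (if s i = 0 then q 0 else max (q (s i)) (q (-s i)))

/-- `q^{(n)}(k)`: probability of a net balance of `k` cumulative jumps at maturity. -/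
def qfull (n m : ℕ) (q : ℤ → ℝ) (k : ℤ) : ℝ :=
  ∑ s ∈ (paths n m).filter (fun s => levelAt n s n = k), pathWeight n q s

/-- `q̃^{(n)}(k)`: enlarged probability of a net balance of `k` cumulative jumps at maturity. -/
def qtilde (n m : ℕ) (q : ℤ → ℝ) (k : ℤ) : ℝ :=
  ∑ s ∈ (paths n m).filter (fun s => levelAt n s n = k), modWeight n q s

/-- `q^{k̄,(n)}(k)`: probability of a net balance of `k` jumps at maturity while reaching at
some time a net balance higher than `k̄`. -/
def qup (n m : ℕ) (q : ℤ → ℝ) (kbar : ℕ) (k : ℤ) : ℝ :=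
  ∑ s ∈ (paths n m).filter
      (fun s => levelAt n s n = k ∧ ∃ t ≤ n, (kbar : ℤ) + 1 ≤ levelAt n s t),
    pathWeight n q s

/-- `q_{l̄}^{(n)}(k)`: probability of a net balance of `k` jumps at maturity while reaching at
some time a net balance lower than `-l̄`. -/
def qdown (n m : ℕ) (q : ℤ → ℝ) (lbar : ℕ) (k : ℤ) : ℝ :=
  ∑ s ∈ (paths n m).filter
      (fun s => levelAt n s n = k ∧ ∃ t ≤ n, levelAt n s t ≤ -(lbar : ℤ) - 1),
    pathWeight n q s

/-- `q^{cut,(n)}(k)`: probability of reaching level `k` at maturity without ever leaving the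
band `[-l̄, k̄]`. -/
def qcut (n m : ℕ) (q : ℤ → ℝ) (kbar lbar : ℕ) (k : ℤ) : ℝ :=
  ∑ s ∈ (paths n m).filter
      (fun s => levelAt n s n = k ∧
        ∀ t ≤ n, -(lbar : ℤ) ≤ levelAt n s t ∧ levelAt n s t ≤ (kbar : ℤ)),
    pathWeight n q s

/-- `P(j) = C(n,j) p^j (1-p)^(n-j)`. -/
def binomP (n : ℕ) (p : ℝ) (j : ℕ) : ℝ :=
  (n.choose j : ℝ) * p ^ j * (1 - p) ^ (n - j)

/-- Put payoff at the terminal node `(n, j, k)`. -/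
def putPayoff (n : ℕ) (S0 K σ dt h : ℝ) (j : ℕ) (k : ℤ) : ℝ :=
  max (K - S0 * Real.exp ((2 * (j : ℝ) - (n : ℝ)) * (σ * Real.sqrt dt) + h * (k : ℝ))) 0

/-- European put value `V` on the full tree. -/
def Vput (n m : ℕ) (q : ℤ → ℝ) (p S0 K σ τ h r : ℝ) : ℝ :=
  Real.exp (-(r * τ)) *
    ∑ k ∈ Finset.Icc (-((m : ℤ) * n)) ((m : ℤ) * n), ∑ j ∈ Finset.range (n + 1),
      putPayoff n S0 K σ (τ / n) h j k * binomP n p j * qfull n m q k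

/-- European put value `V^{TT}` on the truncated tree. -/
def VTT (n m : ℕ) (q : ℤ → ℝ) (p S0 K σ τ h r : ℝ) (kbar lbar : ℕ) : ℝ :=
  Real.exp (-(r * τ)) *
    ∑ k ∈ Finset.Icc (-(lbar : ℤ)) (kbar : ℤ), ∑ j ∈ Finset.range (n + 1),
      putPayoff n S0 K σ (τ / n) h j k * binomP n p j * qcut n m q kbar lbar k

/-- The sequence `W_i`: `W₁ = w₁`, `W_{i+1} = w_{i+1} + W_i^{(i+1)/i}` (real powers). -/
def Wseq (w : ℕ → ℝ) : ℕ → ℝ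
  | 0 => 0
  | 1 => w 1
  | (i + 2) => w (i + 2) + Wseq w (i + 1) ^ (((i : ℝ) + 2) / ((i : ℝ) + 1))

/-- `M_i = max { W_i, W_i^{(1-i)/i} }` (real powers). -/
def Mseq (w : ℕ → ℝ) (i : ℕ) : ℝ :=
  max (Wseq w i) (Wseq w i ^ ((1 - (i : ℝ)) / (i : ℝ)))

/-- `G = 2 m max{W_m, 1} e^{W_m} ∏_{i=1}^{m-1} M_i²`. -/
def Gconst (w : ℕ → ℝ) (m : ℕ) : ℝ :=
  2 * m * max (Wseq w m) 1 * Real.exp (Wseq w m) * ∏ i ∈ Finset.Icc 1 (m - 1), (Mseq w i) ^ 2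

/-- Value of the underlying at a node with (real) time index `i`, `j` up Brownian moves and
net jump level `l`. -/
def Sval (S0 σ dt h : ℝ) (i : ℝ) (j : ℕ) (l : ℤ) : ℝ :=
  S0 * Real.exp ((2 * (j : ℝ) - i) * (σ * Real.sqrt dt) + (l : ℝ) * h)

/-- Full backward European put price; `VEfull … d j l` is the value `V_E(n-d, j, l)`
(`d` = number of remaining steps). -/
def VEfull (n m : ℕ) (q : ℤ → ℝ) (p dt S0 K σ h r : ℝ) : ℕ → ℕ → ℤ → ℝ
  | 0, j, l => max (K - Sval S0 σ dt h (n : ℝ) j l) 0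
  | (d + 1), j, l =>
      Real.exp (-(r * dt)) *
        ∑ k ∈ Finset.Icc (-(m : ℤ)) (m : ℤ),
          (VEfull n m q p dt S0 K σ h r d (j + 1) (l + k) * p +
            VEfull n m q p dt S0 K σ h r d j (l + k) * (1 - p)) * q k

/-- Full backward American put price; `VAfull … d j l` is the value `V_A(n-d, j, l)`. -/
def VAfull (n m : ℕ) (q : ℤ → ℝ) (p dt S0 K σ h r : ℝ) : ℕ → ℕ → ℤ → ℝ
  | 0, j, l => max (K - Sval S0 σ dt h (n : ℝ) j l) 0
  | (d + 1), j, l =>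
      max
        (Real.exp (-(r * dt)) *
          ∑ k ∈ Finset.Icc (-(m : ℤ)) (m : ℤ),
            (VAfull n m q p dt S0 K σ h r d (j + 1) (l + k) * p +
              VAfull n m q p dt S0 K σ h r d j (l + k) * (1 - p)) * q k)
        (K - Sval S0 σ dt h ((n : ℝ) - (d + 1)) j l)

/-- Truncated backward European put price with boundary value `b`;
`VEtr … d j l` is the value `V_E^b(n-d, j, l)`. -/
def VEtr (n m : ℕ) (q : ℤ → ℝ) (p dt S0 K σ h r b : ℝ) (kbar lbar : ℕ) :
    ℕ → ℕ → ℤ → ℝ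
  | 0, j, l =>
      if -(lbar : ℤ) ≤ l ∧ l ≤ (kbar : ℤ) then max (K - Sval S0 σ dt h (n : ℝ) j l) 0 else b
  | (d + 1), j, l =>
      if -(lbar : ℤ) ≤ l ∧ l ≤ (kbar : ℤ) then
        Real.exp (-(r * dt)) *
          ∑ k ∈ Finset.Icc (-(m : ℤ)) (m : ℤ),
            (VEtr n m q p dt S0 K σ h r b kbar lbar d (j + 1) (l + k) * p +
              VEtr n m q p dt S0 K σ h r b kbar lbar d j (l + k) * (1 - p)) * q k
      else b

/-- Truncated backward American put price with boundary value `b`;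
`VAtr … d j l` is the value `V_A^b(n-d, j, l)`. -/
def VAtr (n m : ℕ) (q : ℤ → ℝ) (p dt S0 K σ h r b : ℝ) (kbar lbar : ℕ) :
    ℕ → ℕ → ℤ → ℝ
  | 0, j, l =>
      if -(lbar : ℤ) ≤ l ∧ l ≤ (kbar : ℤ) then max (K - Sval S0 σ dt h (n : ℝ) j l) 0 else b
  | (d + 1), j, l =>
      if -(lbar : ℤ) ≤ l ∧ l ≤ (kbar : ℤ) then
        max
          (Real.exp (-(r * dt)) *
            ∑ k ∈ Finset.Icc (-(m : ℤ)) (m : ℤ),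
              (VAtr n m q p dt S0 K σ h r b kbar lbar d (j + 1) (l + k) * p +
                VAtr n m q p dt S0 K σ h r b kbar lbar d j (l + k) * (1 - p)) * q k)
          (K - Sval S0 σ dt h ((n : ℝ) - (d + 1)) j l)
      else b

/-- The sum, over all jump-path prefixes that first exit the band `[-l̄, k̄]` at some time
`1 ≤ i ≤ n`, of the prefix probability times `b e^{-r i Δt}`. -/
def exitSum (n m : ℕ) (q : ℤ → ℝ) (r dt : ℝ) (kbar lbar : ℕ) (b : ℝ) : ℝ :=
  ∑ i ∈ Finset.Icc 1 n,
    ∑ y ∈ (paths i m).filter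
        (fun y =>
          (∀ t < i, -(lbar : ℤ) ≤ levelAt i y t ∧ levelAt i y t ≤ (kbar : ℤ)) ∧
          ¬(-(lbar : ℤ) ≤ levelAt i y i ∧ levelAt i y i ≤ (kbar : ℤ))),
      pathWeight i q y * (b * Real.exp (-(r * (i : ℝ) * dt)))

end HScut

open HScut

/-! A path ending at level `k ≥ k̄` makes at least `k̄` up-jumps, so the tail is dominated by the
binomial moment `∑ₛ C(#up(s), k̄) π̃(s)`. Since `π̃` is a product weight, expanding `C(#up(s), k̄)`
as a count of `k̄`-sets of up-jump times gives the moment in closed form,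
`C(n, k̄) (w/n)^k̄ (q₀ + 2w/n)^(n-k̄)`. Finally `C(n, k̄) ≤ n^k̄ / k̄!` and
`q₀ + 2w/n ≤ 1 + w/n ≤ e^(w/n)`. -/

namespace Finset

variable {ι α β R : Type*}

theorem sum_filter_le_sum_choose_mul [Semiring R] [PartialOrder R] [IsOrderedRing R]
    (S : Finset β) (p : β → Prop) [DecidablePred p] (N : β → ℕ) (f : β → R) (k : ℕ)
    (hN : ∀ s ∈ S, p s → k ≤ N s) (hf : ∀ s ∈ S, 0 ≤ f s) :
    ∑ s ∈ S with p s, f s ≤ ∑ s ∈ S, ((N s).choose k : R) * f s :=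
  calc ∑ s ∈ S with p s, f s ≤ ∑ s ∈ S with p s, ((N s).choose k : R) * f s :=
        sum_le_sum fun s hs => by
          obtain ⟨hsS, hps⟩ := mem_filter.1 hs
          have hchoose : (1 : R) ≤ (N s).choose k :=
            Nat.cast_one (R := R) ▸ Nat.mono_cast (Nat.choose_pos (hN s hsS hps))
          exact le_mul_of_one_le_left (hf s hsS) hchoose
    _ ≤ ∑ s ∈ S, ((N s).choose k : R) * f s :=
        sum_le_sum_of_subset_of_nonneg (filter_subset _ _) fun s hs _ =>
          mul_nonneg (Nat.cast_nonneg _) (hf s hs)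

theorem powersetCard_univ_filter_subset [Fintype ι] [DecidableEq ι] (U : Finset ι) (k : ℕ) :
    {A ∈ powersetCard k (univ : Finset ι) | A ⊆ U} = powersetCard k U := by
  ext A
  simp only [mem_filter, mem_powersetCard, subset_univ, true_and]
  tauto

theorem filter_piFinset_eqOn_const [Fintype ι] [DecidableEq ι] [DecidableEq α] {t : Finset α}
    {a : α} (ha : a ∈ t) (A : Finset ι) :
    {s ∈ Fintype.piFinset (fun _ : ι => t) | A ⊆ ({i | s i = a} : Finset ι)} =
      Fintype.piFinset fun i => if i ∈ A then {a} else t := by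
  ext s
  simp only [mem_filter, Fintype.mem_piFinset, subset_iff, mem_filter, mem_univ, true_and]
  constructor
  · rintro ⟨hst, hsA⟩ i
    split_ifs with hi
    · exact mem_singleton.2 (hsA hi)
    · exact hst i
  · intro hs
    refine ⟨fun i => ?_, fun i hi => by simpa [hi] using hs i⟩
    by_cases hi : i ∈ A
    · have hsi := hs i
      rw [if_pos hi, mem_singleton] at hsi
      exact hsi ▸ ha
    · simpa [hi] using hs i

theorem sum_piFinset_choose_card_filter_mul_prod [Fintype ι] [DecidableEq ι] [DecidableEq α]
    [CommSemiring R] {t : Finset α} {a : α} (ha : a ∈ t) (f : α → R) (k : ℕ) :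
    ∑ s ∈ Fintype.piFinset (fun _ : ι => t), ((#{i | s i = a}).choose k : R) * ∏ i, f (s i) =
      (Fintype.card ι).choose k * (f a ^ k * (∑ x ∈ t, f x) ^ (Fintype.card ι - k)) := by
  have hchoose (s : ι → α) : ((#{i | s i = a}).choose k : R) =
      ∑ A ∈ powersetCard k univ, if A ⊆ ({i | s i = a} : Finset ι) then 1 else 0 := by
    rw [sum_boole, powersetCard_univ_filter_subset, card_powersetCard]
  have hfiber (A : Finset ι) (hA : A ∈ powersetCard k univ) :
      ∑ s ∈ Fintype.piFinset (fun _ : ι => t) with A ⊆ ({i | s i = a} : Finset ι),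
        ∏ i, f (s i) =
        f a ^ k * (∑ x ∈ t, f x) ^ (Fintype.card ι - k) := by
    have hAk : #A = k := (mem_powersetCard.1 hA).2
    rw [filter_piFinset_eqOn_const ha, ← prod_univ_sum]
    simp_rw [apply_ite (fun u => ∑ x ∈ u, f x), sum_singleton]
    rw [prod_ite, prod_const, prod_const, filter_not, filter_mem_eq_of_subset (subset_univ A),
      card_sdiff_of_subset (subset_univ A), card_univ, hAk]
  simp_rw [hchoose, sum_mul, ite_mul, one_mul, zero_mul]
  rw [sum_comm]
  simp_rw [← sum_filter]
  rw [sum_congr rfl hfiber, sum_const, card_powersetCard, card_univ, nsmul_eq_mul]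

end Finset

theorem choose_mul_pow_mul_pow_le_exp {W b : ℝ} (hW : 0 ≤ W) (hb0 : 0 ≤ b) (hb : b ≤ 1 + W)
    (n k : ℕ) :
    n.choose k * (W ^ k * b ^ (n - k)) ≤ Real.exp (n * W) * (n * W) ^ k / k.factorial := by
  have hpow : b ^ (n - k) ≤ Real.exp (n * W) :=
    calc b ^ (n - k) ≤ (1 + W) ^ (n - k) := pow_le_pow_left₀ hb0 hb _
      _ ≤ (1 + W) ^ n := pow_le_pow_right₀ (by linarith) (Nat.sub_le n k)
      _ ≤ Real.exp W ^ n :=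
        pow_le_pow_left₀ (by linarith) (by linarith [Real.add_one_le_exp W]) n
      _ = Real.exp (n * W) := (Real.exp_nat_mul W n).symm
  calc (n.choose k : ℝ) * (W ^ k * b ^ (n - k))
      ≤ n ^ k / k.factorial * (W ^ k * Real.exp (n * W)) := by
        gcongr
        exact Nat.choose_le_pow_div k n
    _ = Real.exp (n * W) * (n * W) ^ k / k.factorial := by ring

namespace HScut

def modRate (q : ℤ → ℝ) (x : ℤ) : ℝ :=
  if x = 0 then q 0 else max (q x) (q (-x))

variable {n : ℕ} {q : ℤ → ℝ}

theorem modWeight_eq_prod_modRate (s : Fin n → ℤ) : modWeight n q s = ∏ i, modRate q (s i) :=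
  rfl

theorem modRate_one : modRate q 1 = max (q 1) (q (-1)) := rfl

theorem sum_Icc_modRate :
    ∑ x ∈ Icc (-1 : ℤ) 1, modRate q x = q 0 + 2 * max (q 1) (q (-1)) := by
  rw [show Icc (-1 : ℤ) 1 = {-1, 0, 1} by decide, sum_insert (by decide), sum_insert (by decide),
    sum_singleton]
  simp only [modRate, neg_neg, max_comm (q (-1))]
  norm_num
  ring

theorem modRate_nonneg (hq0 : 0 ≤ q 0) (hqp : 0 ≤ q 1) {x : ℤ} (hx : x ∈ Icc (-1 : ℤ) 1) :
    0 ≤ modRate q x := by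
  obtain ⟨hx1, hx2⟩ := mem_Icc.1 hx
  interval_cases x <;> simp [modRate, hq0, hqp]

theorem modWeight_nonneg (hq0 : 0 ≤ q 0) (hqp : 0 ≤ q 1) {s : Fin n → ℤ}
    (hs : s ∈ paths n 1) : 0 ≤ modWeight n q s :=
  prod_nonneg fun i _ => modRate_nonneg hq0 hqp (Fintype.mem_piFinset.1 hs i)

theorem levelAt_self (s : Fin n → ℤ) : levelAt n s n = ∑ i, s i := by
  rw [levelAt, filter_true_of_mem fun (i : Fin n) _ => i.isLt]

theorem levelAt_self_le_card {s : Fin n → ℤ} (hs : s ∈ paths n 1) :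
    levelAt n s n ≤ #{i | s i = 1} := by
  rw [levelAt_self, natCast_card_filter]
  refine sum_le_sum fun i _ => ?_
  have hsi := mem_Icc.1 (Fintype.mem_piFinset.1 hs i)
  split_ifs <;> omega

theorem sum_paths_choose_mul_modWeight (n k : ℕ) (q : ℤ → ℝ) :
    ∑ s ∈ paths n 1, ((#{i | s i = 1}).choose k : ℝ) * modWeight n q s =
      n.choose k * (max (q 1) (q (-1)) ^ k * (q 0 + 2 * max (q 1) (q (-1))) ^ (n - k)) := by
  have h := sum_piFinset_choose_card_filter_mul_prod (ι := Fin n) (t := Icc (-1 : ℤ) 1) (a := 1)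
    (by decide) (modRate q) k
  rw [modRate_one, sum_Icc_modRate, Fintype.card_fin] at h
  exact h

theorem sum_Icc_qtilde_le (hq0 : 0 ≤ q 0) (hqp : 0 ≤ q 1) (a b : ℕ) :
    ∑ k ∈ Icc a b, qtilde n 1 q k ≤
      n.choose a * (max (q 1) (q (-1)) ^ a * (q 0 + 2 * max (q 1) (q (-1))) ^ (n - a)) :=
  calc ∑ k ∈ Icc a b, qtilde n 1 q k
      = ∑ s ∈ paths n 1 with levelAt n s n ∈ (Icc a b).image Nat.cast, modWeight n q s := by
        rw [← sum_fiberwise_eq_sum_filter, sum_image Nat.cast_injective.injOn]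
        rfl
    _ ≤ ∑ s ∈ paths n 1, ((#{i | s i = 1}).choose a : ℝ) * modWeight n q s := by
        refine sum_filter_le_sum_choose_mul _ _ _ _ _ (fun s hs hlevel => ?_)
          fun s hs => modWeight_nonneg hq0 hqp hs
        obtain ⟨k, hk, hks⟩ := mem_image.1 hlevel
        have hk_le := hks ▸ levelAt_self_le_card hs
        have hak := (mem_Icc.1 hk).1
        omega
    _ = _ := sum_paths_choose_mul_modWeight n a q

end HScut

theorem qtilde_tail_sum_bound_general (n : ℕ) (q : ℤ → ℝ)
    (hqm : 0 ≤ q (-1)) (hq0 : 0 ≤ q 0) (hqp : 0 ≤ q 1)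
    (hsum : q (-1) + q 0 + q 1 = 1)
    (w : ℝ) (hw : w = (n : ℝ) * max (q 1) (q (-1)))
    (kbar : ℕ) :
    (∑ k ∈ Finset.Icc kbar n, qtilde n 1 q (k : ℤ)) ≤
      4 * Real.exp w * w ^ kbar / (Nat.factorial kbar : ℝ) := by
  subst hw
  set W := max (q 1) (q (-1))
  have hW : 0 ≤ W := le_max_of_le_left hqp
  have hbase : q 0 + 2 * W ≤ 1 + W := by linarith [max_le_add_of_nonneg hqp hqm]
  calc (∑ k ∈ Icc kbar n, qtilde n 1 q (k : ℤ))
      ≤ n.choose kbar * (W ^ kbar * (q 0 + 2 * W) ^ (n - kbar)) := sum_Icc_qtilde_le hq0 hqp kbar n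
    _ ≤ Real.exp (n * W) * (n * W) ^ kbar / kbar.factorial :=
        choose_mul_pow_mul_pow_le_exp hW (by positivity) hbase n kbar
    _ ≤ _ := by
        rw [mul_assoc 4, mul_div_assoc 4]
        exact le_mul_of_one_le_left (by positivity) (by norm_num)

/-- For every integer `k̄` with `2w − 1 ≤ k̄ ≤ n` one has
`∑_{k=k̄}^{n} q̃^{(n)}(k) ≤ 4 e^w w^{k̄} / k̄!`. -/
theorem qtilde_tail_sum_bound (n : ℕ) (hn : 1 ≤ n) (q : ℤ → ℝ)
    (hqm : 0 ≤ q (-1)) (hq0 : 0 ≤ q 0) (hqp : 0 ≤ q 1)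
    (hsum : q (-1) + q 0 + q 1 = 1)
    (w : ℝ) (hw : w = (n : ℝ) * max (q 1) (q (-1)))
    (kbar : ℕ) (hk1 : 2 * w - 1 ≤ (kbar : ℝ)) (hk2 : kbar ≤ n) :
    (∑ k ∈ Finset.Icc kbar n, qtilde n 1 q (k : ℤ)) ≤
      4 * Real.exp w * w ^ kbar / (Nat.factorial kbar : ℝ) :=
  qtilde_tail_sum_bound_general n q hqm hq0 hqp hsum w hw kbar
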